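/- arXiv:1612.04058 — 4 statements merged into one kernel-verified Lean document; each statement's English description precedes it below -/
import Mathlib

section
/- Fix an integer M ≥ 1, reals 0 < γ_b < γ_t < 1, w ∈ (0,1), Ae > 0, and a detection threshold z_th with 0 < z_th < Ae. Define t₀(σ,σ₀) = (1−γ_b)·Q(√M·z_th/σ₀) + γ_b·Q((z_th−Ae)/√(σ₀²/M+σ²)) and t₁(σ,σ₀) = (1−γ_t)·Q(√M·z_th/σ₀) + γ_t·Q((z_th−Ae)/√(σ₀²/M+σ²)). Then as (σ, σ₀) → (0⁺, 0⁺), the gap C₁(γ_b, γ_t, w) − C₁(t₀(σ,σ₀), t₁(σ,σ₀), w) tends to 0 (asymptotic tightness of the upper and lower transmission-rate bounds, Proposition 1). -/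
/-!
As `σ, σ₀ → 0⁺` the argument `√M z_th / σ₀` of the first tail tends to `+∞` and the argument
`(z_th − Ae) / √(σ₀²/M + σ²)` of the second to `−∞`, so each crossover mixture
`(1 − γ) Q(·) + γ Q(·)` tends to `γ`. Since `H₂` is the binary entropy, which is continuous on all
of `ℝ`, `C₁` is continuous and the gap tends to `C₁(γ_b, γ_t, w) − C₁(γ_b, γ_t, w) = 0`.
-/

open MeasureTheory Filter Real

/-- The Gaussian tail function `Q(x) = ∫_x^∞ (1/√(2π)) e^{−u²/2} du`. -/
noncomputable def gaussQ (x : ℝ) : ℝ :=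
  ∫ u in Set.Ioi x, (Real.sqrt (2 * Real.pi))⁻¹ * Real.exp (-u ^ 2 / 2)

/-- Binary entropy function. -/
noncomputable def H2 (x : ℝ) : ℝ := -x * Real.log x - (1 - x) * Real.log (1 - x)

/-- Mutual information of a binary asymmetric channel with crossover
parameters `p01, p11` and input probability `w`. -/
noncomputable def C1 (p01 p11 w : ℝ) : ℝ :=
  H2 (w * p11 + (1 - w) * p01) - w * H2 p11 - (1 - w) * H2 p01

open ProbabilityTheory Topology

lemma H2_eq_binEntropy : H2 = binEntropy := by
  ext x
  simp only [H2, binEntropy, log_inv]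
  ring

lemma continuous_C1 (w : ℝ) : Continuous fun q : ℝ × ℝ => C1 q.1 q.2 w := by
  simp only [C1, H2_eq_binEntropy]
  fun_prop

lemma gaussQ_eq_one_sub_cdf : gaussQ = fun x => 1 - cdf (gaussianReal 0 1) x := by
  ext x
  have hQ : gaussQ x = (gaussianReal 0 1).real (Set.Ioi x) := by
    rw [measureReal_def, gaussianReal_apply_eq_integral _ one_ne_zero,
      ENNReal.toReal_ofReal (setIntegral_nonneg measurableSet_Ioi
        fun u _ => gaussianPDFReal_nonneg 0 1 u)]
    simp [gaussQ, gaussianPDFReal]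
  rw [hQ, cdf_eq_real, ← Set.compl_Iic, probReal_compl_eq_one_sub measurableSet_Iic]

lemma tendsto_gaussQ_atTop : Tendsto gaussQ atTop (𝓝 0) := by
  simpa [gaussQ_eq_one_sub_cdf] using (tendsto_cdf_atTop (gaussianReal 0 1)).const_sub 1

lemma tendsto_gaussQ_atBot : Tendsto gaussQ atBot (𝓝 1) := by
  simpa [gaussQ_eq_one_sub_cdf] using (tendsto_cdf_atBot (gaussianReal 0 1)).const_sub 1

lemma tendsto_mixture_gaussQ {α : Type*} {l : Filter α} {f g : α → ℝ} (hf : Tendsto f l atTop)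
    (hg : Tendsto g l atBot) (γ : ℝ) :
    Tendsto (fun x => (1 - γ) * gaussQ (f x) + γ * gaussQ (g x)) l (𝓝 γ) := by
  simpa using ((tendsto_gaussQ_atTop.comp hf).const_mul (1 - γ)).add
    ((tendsto_gaussQ_atBot.comp hg).const_mul γ)

lemma Filter.Tendsto.const_div_atTop_of_nhdsGT_zero {α : Type*} {l : Filter α} {f : α → ℝ}
    (hf : Tendsto f l (𝓝[>] 0)) {c : ℝ} (hc : 0 < c) : Tendsto (fun x => c / f x) l atTop := by
  simpa only [div_eq_mul_inv, Function.comp_apply] using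
    (tendsto_inv_nhdsGT_zero.comp hf).const_mul_atTop hc

lemma tendsto_sqrt_div_add_sq_nhdsGT_zero {a : ℝ} (ha : 0 ≤ a) :
    Tendsto (fun p : ℝ × ℝ => √(p.2 ^ 2 / a + p.1 ^ 2)) (𝓝[>] 0 ×ˢ 𝓝[>] 0) (𝓝[>] 0) := by
  refine tendsto_nhdsWithin_of_tendsto_nhds_of_eventually_within _ ?_ ?_
  · have hcont : Continuous fun p : ℝ × ℝ => √(p.2 ^ 2 / a + p.1 ^ 2) := by fun_prop
    have hle : 𝓝[>] (0 : ℝ) ×ˢ 𝓝[>] (0 : ℝ) ≤ 𝓝 (0, 0) := by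
      rw [nhds_prod_eq]; exact prod_mono nhdsWithin_le_nhds nhdsWithin_le_nhds
    simpa using (hcont.tendsto (0, 0)).mono_left hle
  · filter_upwards [prod_mem_prod self_mem_nhdsWithin self_mem_nhdsWithin] with p hp
    exact sqrt_pos.mpr (add_pos_of_nonneg_of_pos (by positivity) (pow_pos hp.1 2))

theorem stmt_0_general (M : ℕ) (hM : 1 ≤ M) (γb γt w Ae zth : ℝ)
    (hz1 : 0 < zth) (hz2 : zth < Ae) :
    Tendsto (fun p : ℝ × ℝ =>
        C1 γb γt w -
          C1
            ((1 - γb) * gaussQ (Real.sqrt M * zth / p.2) +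
              γb * gaussQ ((zth - Ae) / Real.sqrt (p.2 ^ 2 / M + p.1 ^ 2)))
            ((1 - γt) * gaussQ (Real.sqrt M * zth / p.2) +
              γt * gaussQ ((zth - Ae) / Real.sqrt (p.2 ^ 2 / M + p.1 ^ 2)))
            w)
      ((nhdsWithin 0 (Set.Ioi 0)) ×ˢ (nhdsWithin 0 (Set.Ioi 0))) (nhds 0) := by
  have hthermal : Tendsto (fun p : ℝ × ℝ => √M * zth / p.2) (𝓝[>] 0 ×ˢ 𝓝[>] 0) atTop :=
    tendsto_snd.const_div_atTop_of_nhdsGT_zero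
      (mul_pos (sqrt_pos.mpr (by exact_mod_cast hM)) hz1)
  have hshot : Tendsto (fun p : ℝ × ℝ => (zth - Ae) / √(p.2 ^ 2 / M + p.1 ^ 2))
      (𝓝[>] 0 ×ˢ 𝓝[>] 0) atBot := by
    have hpos := (tendsto_sqrt_div_add_sq_nhdsGT_zero
      (Nat.cast_nonneg M)).const_div_atTop_of_nhdsGT_zero (sub_pos.mpr hz2)
    simpa only [← neg_sub Ae zth, neg_div, tendsto_neg_atBot_iff] using hpos
  have hC1 := ((continuous_C1 w).tendsto (γb, γt)).comp
    ((tendsto_mixture_gaussQ hthermal hshot γb).prodMk_nhds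
      (tendsto_mixture_gaussQ hthermal hshot γt))
  simpa using hC1.const_sub (C1 γb γt w)

theorem stmt_0 (M : ℕ) (hM : 1 ≤ M) (γb γt w Ae zth : ℝ)
    (hγb : 0 < γb) (hγbt : γb < γt) (hγt : γt < 1)
    (hw : w ∈ Set.Ioo (0 : ℝ) 1) (hAe : 0 < Ae)
    (hz1 : 0 < zth) (hz2 : zth < Ae) :
    Tendsto (fun p : ℝ × ℝ =>
        C1 γb γt w -
          C1
            ((1 - γb) * gaussQ (Real.sqrt M * zth / p.2) +
              γb * gaussQ ((zth - Ae) / Real.sqrt (p.2 ^ 2 / M + p.1 ^ 2)))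
            ((1 - γt) * gaussQ (Real.sqrt M * zth / p.2) +
              γt * gaussQ ((zth - Ae) / Real.sqrt (p.2 ^ 2 / M + p.1 ^ 2)))
            w)
      ((nhdsWithin 0 (Set.Ioi 0)) ×ˢ (nhdsWithin 0 (Set.Ioi 0))) (nhds 0) :=
  stmt_0_general M hM γb γt w Ae zth hz1 hz2
end

section
/- Fix an integer M ≥ 1, reals Ae > 0, 0 < z_th < Ae, r₀, r₁ ∈ (0,1) with r₀ + r₁ = 1, and μ > 0. For σ, σ₀ > 0 set x₁ = (z_th − Ae)/√(σ² + σ₀²/M) and x₂ = z_th/σ₀, and define q₀ = (1−Q(x₁))r₁/((1−Q(x₁))r₁ + (1−Q(x₂))r₀) and q₁ = Q(x₁)r₁/(Q(x₁)r₁ + Q(x₂)r₀). Then the M-interval conditional entropy M·[((1−Q(x₁))r₁ + (1−Q(x₂))r₀)·H₂(q₀) + (Q(x₁)r₁ + Q(x₂)r₀)·H₂(q₁)], divided by (σ² + σ₀²)^μ, tends to 0 as (σ, σ₀) → (0⁺, 0⁺) (Theorem 4: H(N|N̂)/(σ²+σ₀²)^μ → 0 for the M-interval photoelectron vector). -/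
/-!
A binary channel whose two error probabilities are small has small conditional entropy: each of
the two terms `D * H₂(a / D)` of `H(N | N̂)` is at most `3 √ε`, where `ε` is the probability of
the less likely outcome in that term, because `H₂(x) ≤ 3 √x` and `H₂(1 - x) = H₂(x)`. For the
threshold detector the error probabilities are `1 - Q(x₁)` and `Q(x₂)` with
`x₁² ≥ (A_e - z_th)² / (σ² + σ₀²)` and `x₂² ≥ z_th² / (σ² + σ₀²)`, so the Chernoff bound
`Q(x) ≤ exp (-x² / 2)` makes the entropy `O(exp (-c / (σ² + σ₀²)))`, which is `o(s ^ μ)` for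
every exponent `μ` as `s = σ² + σ₀² → 0⁺`.
-/

open MeasureTheory Filter Real

open ProbabilityTheory

lemma gaussQ_eq_measureReal (x : ℝ) : gaussQ x = (gaussianReal 0 1).real (Set.Ioi x) := by
  rw [measureReal_def, gaussianReal_apply_eq_integral _ one_ne_zero,
    ENNReal.toReal_ofReal
      (setIntegral_nonneg measurableSet_Ioi fun _ _ ↦ gaussianPDFReal_nonneg _ _ _)]
  simp [gaussQ, gaussianPDFReal]

lemma one_sub_gaussQ_eq_measureReal (x : ℝ) :
    1 - gaussQ x = (gaussianReal 0 1).real (Set.Iic x) := by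
  rw [gaussQ_eq_measureReal, ← Set.compl_Ioi, probReal_compl_eq_one_sub measurableSet_Ioi]

lemma gaussQ_le_exp {x : ℝ} (hx : 0 ≤ x) : gaussQ x ≤ exp (-x ^ 2 / 2) := by
  calc gaussQ x ≤ (gaussianReal 0 1).real {u | x ≤ id u} := by
        rw [gaussQ_eq_measureReal]; exact measureReal_mono fun u (hu : x < u) ↦ hu.le
    _ ≤ exp (-x * x) * mgf id (gaussianReal 0 1) x :=
        measure_ge_le_exp_mul_mgf x hx (integrable_exp_mul_gaussianReal x)
    _ = exp (-x ^ 2 / 2) := by rw [mgf_id_gaussianReal, ← exp_add]; congr 1; push_cast; ring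

lemma one_sub_gaussQ_le_exp {x : ℝ} (hx : x ≤ 0) : 1 - gaussQ x ≤ exp (-x ^ 2 / 2) := by
  calc 1 - gaussQ x = (gaussianReal 0 1).real {u | id u ≤ x} := one_sub_gaussQ_eq_measureReal x
    _ ≤ exp (-x * x) * mgf id (gaussianReal 0 1) x :=
        measure_le_le_exp_mul_mgf x hx (integrable_exp_mul_gaussianReal x)
    _ = exp (-x ^ 2 / 2) := by rw [mgf_id_gaussianReal, ← exp_add]; congr 1; push_cast; ring

lemma gaussQ_mem_Icc (x : ℝ) : gaussQ x ∈ Set.Icc 0 1 := by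
  rw [gaussQ_eq_measureReal]; exact ⟨measureReal_nonneg, measureReal_le_one⟩

lemma H2_eq_negMulLog_add (x : ℝ) : H2 x = negMulLog x + negMulLog (1 - x) := by
  simp only [H2, negMulLog]; ring

lemma negMulLog_le_two_mul_sqrt {x : ℝ} (hx : 0 ≤ x) : negMulLog x ≤ 2 * √x := by
  have hsqrt := negMulLog_le_one_sub_self (sqrt_nonneg x)
  calc negMulLog x = 2 * √x * negMulLog √x := by
        rw [← mul_self_sqrt hx, negMulLog_mul, sqrt_mul_self (sqrt_nonneg x)]; ring
    _ ≤ 2 * √x * 1 := by gcongr; linarith [sqrt_nonneg x]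
    _ = 2 * √x := mul_one _

lemma H2_le_three_mul_sqrt {x : ℝ} (h0 : 0 ≤ x) (h1 : x ≤ 1) : H2 x ≤ 3 * √x := by
  have hx : x ≤ √x := le_sqrt_self_iff.2 h1
  have := negMulLog_le_one_sub_self (sub_nonneg.2 h1)
  rw [H2_eq_negMulLog_add]
  linarith [negMulLog_le_two_mul_sqrt h0]

lemma H2_nonneg {x : ℝ} (h0 : 0 ≤ x) (h1 : x ≤ 1) : 0 ≤ H2 x := by
  rw [H2_eq_negMulLog_add]
  exact add_nonneg (negMulLog_nonneg h0 h1) (negMulLog_nonneg (by linarith) (by linarith))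

lemma H2_one_sub (x : ℝ) : H2 (1 - x) = H2 x := by
  rw [H2_eq_negMulLog_add, H2_eq_negMulLog_add, sub_sub_cancel, add_comm]

lemma mul_H2_div_le_three_mul_sqrt {a D : ℝ} (ha : 0 ≤ a) (haD : a ≤ D) (hD : D ≤ 1) :
    D * H2 (a / D) ≤ 3 * √a := by
  rcases (ha.trans haD).eq_or_lt with rfl | hD0
  · simp only [zero_mul]; positivity
  have hdiv : D * √(a / D) ≤ √a := by
    rw [le_sqrt (by positivity) ha, mul_pow, sq_sqrt (div_nonneg ha hD0.le)]
    calc D ^ 2 * (a / D) = a * D := by field_simp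
      _ ≤ a := mul_le_of_le_one_right ha hD
  calc D * H2 (a / D) ≤ D * (3 * √(a / D)) := by
        gcongr
        exact H2_le_three_mul_sqrt (div_nonneg ha hD0.le) ((div_le_one hD0).2 haD)
    _ ≤ 3 * √a := by linarith

lemma mul_H2_div_le_three_mul_sqrt_sub {a D : ℝ} (ha : 0 ≤ a) (haD : a ≤ D) (hD : D ≤ 1) :
    D * H2 (a / D) ≤ 3 * √(D - a) := by
  rcases (ha.trans haD).eq_or_lt with rfl | hD0
  · simp only [zero_mul]; positivity
  have h : a / D = 1 - (D - a) / D := by field_simp; ring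
  rw [h, H2_one_sub]
  exact mul_H2_div_le_three_mul_sqrt (by linarith) (by linarith) hD

lemma mul_H2_div_nonneg {a D : ℝ} (ha : 0 ≤ a) (haD : a ≤ D) : 0 ≤ D * H2 (a / D) := by
  rcases (ha.trans haD).eq_or_lt with rfl | hD0
  · simp
  exact mul_nonneg hD0.le (H2_nonneg (div_nonneg ha hD0.le) ((div_le_one hD0).2 haD))

/-- The conditional entropy `H(N | N̂)` of a binary input `N` with prior `P(N = 0) = r0`,
`P(N = 1) = r1` observed through a binary channel with `P(N̂ = 1 | N = 1) = p` and
`P(N̂ = 1 | N = 0) = q`. -/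
noncomputable def binaryCondEntropy (p q r0 r1 : ℝ) : ℝ :=
  ((1 - p) * r1 + (1 - q) * r0) * H2 ((1 - p) * r1 / ((1 - p) * r1 + (1 - q) * r0)) +
    (p * r1 + q * r0) * H2 (p * r1 / (p * r1 + q * r0))

section binaryCondEntropy

variable {p q r0 r1 : ℝ}

lemma binaryCondEntropy_nonneg (hp : p ∈ Set.Icc 0 1) (hq : q ∈ Set.Icc 0 1) (hr0 : 0 ≤ r0)
    (hr1 : 0 ≤ r1) : 0 ≤ binaryCondEntropy p q r0 r1 := by
  obtain ⟨hp0, hp1⟩ := hp; obtain ⟨hq0, hq1⟩ := hq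
  refine add_nonneg (mul_H2_div_nonneg ?_ ?_) (mul_H2_div_nonneg ?_ ?_) <;>
    nlinarith [mul_nonneg (sub_nonneg.2 hq1) hr0, mul_nonneg hq0 hr0]

lemma binaryCondEntropy_le (hp : p ∈ Set.Icc 0 1) (hq : q ∈ Set.Icc 0 1) (hr0 : 0 ≤ r0)
    (hr1 : 0 ≤ r1) (hr : r0 + r1 = 1) :
    binaryCondEntropy p q r0 r1 ≤ 3 * √(1 - p) + 3 * √q := by
  obtain ⟨hp0, hp1⟩ := hp; obtain ⟨hq0, hq1⟩ := hq
  have hterm0 := mul_H2_div_le_three_mul_sqrt (mul_nonneg (sub_nonneg.2 hp1) hr1)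
    (le_add_of_nonneg_right (mul_nonneg (sub_nonneg.2 hq1) hr0)) (by nlinarith)
  have hterm1 := mul_H2_div_le_three_mul_sqrt_sub (mul_nonneg hp0 hr1)
    (le_add_of_nonneg_right (mul_nonneg hq0 hr0)) (by nlinarith)
  rw [add_sub_cancel_left] at hterm1
  have hmiss : √((1 - p) * r1) ≤ √(1 - p) :=
    sqrt_le_sqrt (mul_le_of_le_one_right (by linarith) (by linarith))
  have hfalse : √(q * r0) ≤ √q := sqrt_le_sqrt (mul_le_of_le_one_right hq0 (by linarith))
  unfold binaryCondEntropy
  linarith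

end binaryCondEntropy

lemma sqrt_one_sub_gaussQ_le_exp {x : ℝ} (hx : x ≤ 0) : √(1 - gaussQ x) ≤ exp (-x ^ 2 / 4) := by
  rw [show -x ^ 2 / 4 = -x ^ 2 / 2 / 2 by ring, exp_half]
  exact sqrt_le_sqrt (one_sub_gaussQ_le_exp hx)

lemma sqrt_gaussQ_le_exp {x : ℝ} (hx : 0 ≤ x) : √(gaussQ x) ≤ exp (-x ^ 2 / 4) := by
  rw [show -x ^ 2 / 4 = -x ^ 2 / 2 / 2 by ring, exp_half]
  exact sqrt_le_sqrt (gaussQ_le_exp hx)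

lemma exp_neg_div_sq_div_four_le {a c d t : ℝ} (ht : 0 < t) (htd : t ^ 2 ≤ d)
    (hca : c ≤ a ^ 2) :
    exp (-(a / t) ^ 2 / 4) ≤ exp (-(c / 4) / d) := by
  rw [exp_le_exp, div_pow, neg_div, neg_div, neg_le_neg_iff, div_right_comm]
  exact div_le_div_of_nonneg_right (div_le_div₀ (by positivity) hca (by positivity) htd)
    zero_le_four

lemma tendsto_mul_exp_neg_div_div_rpow {K c μ : ℝ} (hc : 0 < c) :
    Tendsto (fun s : ℝ => K * exp (-c / s) / s ^ μ) (nhdsWithin 0 (Set.Ioi 0)) (nhds 0) := by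
  have h := ((tendsto_rpow_mul_exp_neg_mul_atTop_nhds_zero μ c hc).const_mul K).comp
    tendsto_inv_nhdsGT_zero
  rw [mul_zero] at h
  refine h.congr' (eventually_nhdsWithin_of_forall fun s (hs : 0 < s) => ?_)
  simp only [Function.comp_apply, inv_rpow hs.le, neg_mul, ← div_eq_mul_inv, neg_div]
  ring

lemma tendsto_sq_add_sq_nhdsGT :
    Tendsto (fun p : ℝ × ℝ => p.1 ^ 2 + p.2 ^ 2)
      (nhdsWithin 0 (Set.Ioi 0) ×ˢ nhdsWithin 0 (Set.Ioi 0)) (nhdsWithin 0 (Set.Ioi 0)) := by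
  rw [← nhdsWithin_prod_eq]
  have h : ContinuousWithinAt (fun p : ℝ × ℝ => p.1 ^ 2 + p.2 ^ 2) (Set.Ioi 0 ×ˢ Set.Ioi 0)
      ((0 : ℝ), (0 : ℝ)) := by
    fun_prop
  simpa using h.tendsto_nhdsWithin fun p (hp : 0 < p.1 ∧ 0 < p.2) => by
    simp only [Set.mem_Ioi]; nlinarith [hp.1, hp.2]

lemma binaryCondEntropy_gaussQ_le {M : ℕ} {Ae zth r0 r1 σ σ₀ : ℝ} (hz1 : 0 < zth)
    (hz2 : zth < Ae) (hr0 : 0 ≤ r0) (hr1 : 0 ≤ r1) (hsum : r0 + r1 = 1) (hσ : 0 < σ)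
    (hσ₀ : 0 < σ₀) :
    binaryCondEntropy (gaussQ ((zth - Ae) / √(σ ^ 2 + σ₀ ^ 2 / M))) (gaussQ (zth / σ₀)) r0 r1 ≤
      6 * exp (-(min ((zth - Ae) ^ 2) (zth ^ 2) / 4) / (σ ^ 2 + σ₀ ^ 2)) := by
  have hv : 0 < σ ^ 2 + σ₀ ^ 2 / M := by positivity
  have hvs : σ ^ 2 + σ₀ ^ 2 / M ≤ σ ^ 2 + σ₀ ^ 2 := by
    rcases M.eq_zero_or_pos with rfl | hM
    · simp [sq_nonneg]
    · gcongr; exact div_le_self (sq_nonneg _) (by exact_mod_cast hM)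
  calc _ ≤ 3 * √(1 - gaussQ ((zth - Ae) / √(σ ^ 2 + σ₀ ^ 2 / M))) +
          3 * √(gaussQ (zth / σ₀)) :=
        binaryCondEntropy_le (gaussQ_mem_Icc _) (gaussQ_mem_Icc _) hr0 hr1 hsum
    _ ≤ 3 * exp (-((zth - Ae) / √(σ ^ 2 + σ₀ ^ 2 / M)) ^ 2 / 4) +
          3 * exp (-(zth / σ₀) ^ 2 / 4) := by
        gcongr
        · exact sqrt_one_sub_gaussQ_le_exp
            (div_nonpos_of_nonpos_of_nonneg (by linarith) (sqrt_nonneg _))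
        · exact sqrt_gaussQ_le_exp (by positivity)
    _ ≤ 3 * exp (-(min ((zth - Ae) ^ 2) (zth ^ 2) / 4) / (σ ^ 2 + σ₀ ^ 2)) +
          3 * exp (-(min ((zth - Ae) ^ 2) (zth ^ 2) / 4) / (σ ^ 2 + σ₀ ^ 2)) := by
        gcongr 3 * ?_ + 3 * ?_
        · exact exp_neg_div_sq_div_four_le (sqrt_pos.2 hv) (by rwa [sq_sqrt hv.le])
            (min_le_left _ _)
        · exact exp_neg_div_sq_div_four_le hσ₀ (by linarith [sq_nonneg σ]) (min_le_right _ _)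
    _ = _ := by ring

theorem stmt_6_general (M : ℕ) (Ae zth r0 r1 μ : ℝ)
    (hz1 : 0 < zth) (hz2 : zth < Ae)
    (hr0 : r0 ∈ Set.Ioo (0 : ℝ) 1) (hr1 : r1 ∈ Set.Ioo (0 : ℝ) 1)
    (hsum : r0 + r1 = 1) :
    Tendsto (fun p : ℝ × ℝ =>
        (M * (((1 - gaussQ ((zth - Ae) / Real.sqrt (p.1 ^ 2 + p.2 ^ 2 / M))) * r1 +
                (1 - gaussQ (zth / p.2)) * r0) *
              H2 ((1 - gaussQ ((zth - Ae) / Real.sqrt (p.1 ^ 2 + p.2 ^ 2 / M))) * r1 /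
                ((1 - gaussQ ((zth - Ae) / Real.sqrt (p.1 ^ 2 + p.2 ^ 2 / M))) * r1 +
                  (1 - gaussQ (zth / p.2)) * r0)) +
            (gaussQ ((zth - Ae) / Real.sqrt (p.1 ^ 2 + p.2 ^ 2 / M)) * r1 +
                gaussQ (zth / p.2) * r0) *
              H2 (gaussQ ((zth - Ae) / Real.sqrt (p.1 ^ 2 + p.2 ^ 2 / M)) * r1 /
                (gaussQ ((zth - Ae) / Real.sqrt (p.1 ^ 2 + p.2 ^ 2 / M)) * r1 +
                  gaussQ (zth / p.2) * r0)))) /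
          (p.1 ^ 2 + p.2 ^ 2) ^ μ)
      ((nhdsWithin 0 (Set.Ioi 0)) ×ˢ (nhdsWithin 0 (Set.Ioi 0))) (nhds 0) := by
  have hc : 0 < min ((zth - Ae) ^ 2) (zth ^ 2) / 4 :=
    div_pos (lt_min (sq_pos_of_ne_zero (sub_ne_zero.2 hz2.ne)) (pow_pos hz1 2)) four_pos
  refine squeeze_zero' ?_ ?_ ((tendsto_mul_exp_neg_div_div_rpow (K := 6 * M) (μ := μ) hc).comp
    tendsto_sq_add_sq_nhdsGT)
  · filter_upwards with p
    exact div_nonneg (mul_nonneg M.cast_nonneg (binaryCondEntropy_nonneg (gaussQ_mem_Icc _)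
      (gaussQ_mem_Icc _) hr0.1.le hr1.1.le)) (rpow_nonneg (by positivity) μ)
  · filter_upwards [prod_mem_prod self_mem_nhdsWithin self_mem_nhdsWithin] with p ⟨hσ, hσ₀⟩
    have h := mul_le_mul_of_nonneg_left
      (binaryCondEntropy_gaussQ_le (M := M) hz1 hz2 hr0.1.le hr1.1.le hsum hσ hσ₀) M.cast_nonneg
    exact div_le_div_of_nonneg_right (h.trans_eq (by ring)) (rpow_nonneg (by positivity) μ)

theorem stmt_6 (M : ℕ) (hM : 1 ≤ M) (Ae zth r0 r1 μ : ℝ)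
    (hAe : 0 < Ae) (hz1 : 0 < zth) (hz2 : zth < Ae)
    (hr0 : r0 ∈ Set.Ioo (0 : ℝ) 1) (hr1 : r1 ∈ Set.Ioo (0 : ℝ) 1)
    (hsum : r0 + r1 = 1) (hμ : 0 < μ) :
    Tendsto (fun p : ℝ × ℝ =>
        (M * (((1 - gaussQ ((zth - Ae) / Real.sqrt (p.1 ^ 2 + p.2 ^ 2 / M))) * r1 +
                (1 - gaussQ (zth / p.2)) * r0) *
              H2 ((1 - gaussQ ((zth - Ae) / Real.sqrt (p.1 ^ 2 + p.2 ^ 2 / M))) * r1 /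
                ((1 - gaussQ ((zth - Ae) / Real.sqrt (p.1 ^ 2 + p.2 ^ 2 / M))) * r1 +
                  (1 - gaussQ (zth / p.2)) * r0)) +
            (gaussQ ((zth - Ae) / Real.sqrt (p.1 ^ 2 + p.2 ^ 2 / M)) * r1 +
                gaussQ (zth / p.2) * r0) *
              H2 (gaussQ ((zth - Ae) / Real.sqrt (p.1 ^ 2 + p.2 ^ 2 / M)) * r1 /
                (gaussQ ((zth - Ae) / Real.sqrt (p.1 ^ 2 + p.2 ^ 2 / M)) * r1 +
                  gaussQ (zth / p.2) * r0)))) /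
          (p.1 ^ 2 + p.2 ^ 2) ^ μ)
      ((nhdsWithin 0 (Set.Ioi 0)) ×ˢ (nhdsWithin 0 (Set.Ioi 0))) (nhds 0) :=
  stmt_6_general M Ae zth r0 r1 μ hz1 hz2 hr0 hr1 hsum
end

section
/- Let 0 < γ_b < γ_t < 1, define F(x) = log( ((1−γ_t) + γ_t·e^x) / ((1−γ_b) + γ_b·e^x) ), and set x₀ = (1/2)·log( (1−γ_t)(1−γ_b) / (γ_t·γ_b) ). Then F is centrally symmetric about the point (x₀, F(x₀)): for every x ∈ ℝ, F(x₀ + x) + F(x₀ − x) = 2·F(x₀) (Theorem 5, symmetry part). -/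
/-! The symmetric second difference of `y ↦ log (a + b * exp y)` at `y` depends only on
`q = a * b * exp y / (a + b * exp y) ^ 2`: it is `log (1 + 2 * (cosh x - 1) * q)`.
The point `x₀` is chosen so that `γt * γb * exp x₀ ^ 2 = (1 - γt) * (1 - γb)`, and under this
relation the numerator and the denominator of `F` have the same `q` at `x₀`, so their second
differences cancel and `F (x₀ + x) + F (x₀ - x) - 2 * F x₀ = 0`. -/

open Real

lemma add_mul_exp_add_mul_add_mul_exp_sub (a b y x : ℝ) :
    (a + b * exp (y + x)) * (a + b * exp (y - x)) =
      (a + b * exp y) ^ 2 + 2 * (cosh x - 1) * (a * b * exp y) := by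
  rw [cosh_eq, exp_add, exp_sub, exp_neg]
  field_simp
  ring

lemma log_add_mul_exp_add_add_log_add_mul_exp_sub {a b : ℝ} (ha : 0 < a) (hb : 0 < b)
    (y x : ℝ) :
    log (a + b * exp (y + x)) + log (a + b * exp (y - x)) =
      2 * log (a + b * exp y) +
        log (1 + 2 * (cosh x - 1) * (a * b * exp y / (a + b * exp y) ^ 2)) := by
  have hA : 0 < a + b * exp y := by positivity
  have hq : 0 ≤ 2 * (cosh x - 1) * (a * b * exp y / (a + b * exp y) ^ 2) := by
    have := one_le_cosh x
    have : 0 ≤ cosh x - 1 := by linarith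
    positivity
  have hsplit : (a + b * exp y) ^ 2 + 2 * (cosh x - 1) * (a * b * exp y) =
      (a + b * exp y) ^ 2 * (1 + 2 * (cosh x - 1) * (a * b * exp y / (a + b * exp y) ^ 2)) := by
    field_simp
  rw [← log_mul (by positivity) (by positivity), add_mul_exp_add_mul_add_mul_exp_sub, hsplit,
    log_mul (by positivity) (by positivity), log_pow, Nat.cast_ofNat]

lemma mul_div_add_mul_sq_eq_of_mul_sq_eq {a b c d s : ℝ} (hab : a + b * s ≠ 0)
    (hcd : c + d * s ≠ 0) (h : b * d * s ^ 2 = a * c) :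
    a * b * s / (a + b * s) ^ 2 = c * d * s / (c + d * s) ^ 2 := by
  rw [div_eq_div_iff (pow_ne_zero 2 hab) (pow_ne_zero 2 hcd)]
  linear_combination (a * d - b * c) * s * h

lemma exp_half_mul_log_sq {r : ℝ} (hr : 0 < r) : exp ((1 / 2) * log r) ^ 2 = r := by
  rw [← exp_nat_mul, Nat.cast_ofNat, ← mul_assoc, mul_one_div_cancel two_ne_zero, one_mul,
    exp_log hr]

theorem stmt_8 (γb γt : ℝ) (hγb : 0 < γb) (hγbt : γb < γt) (hγt : γt < 1)
    (F : ℝ → ℝ)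
    (hF : ∀ x : ℝ,
      F x = Real.log (((1 - γt) + γt * Real.exp x) / ((1 - γb) + γb * Real.exp x)))
    (x0 : ℝ) (hx0 : x0 = (1 / 2) * Real.log ((1 - γt) * (1 - γb) / (γt * γb))) :
    ∀ x : ℝ, F (x0 + x) + F (x0 - x) = 2 * F x0 := by
  intro x
  have hγt₀ : 0 < γt := hγb.trans hγbt
  have hγt₁ : 0 < 1 - γt := by linarith
  have hγb₁ : 0 < 1 - γb := by linarith
  have hx0_sq : γt * γb * exp x0 ^ 2 = (1 - γt) * (1 - γb) := by
    rw [hx0, exp_half_mul_log_sq (by positivity)]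
    field_simp
  have hq := mul_div_add_mul_sq_eq_of_mul_sq_eq (by positivity) (by positivity) hx0_sq
  have hnum := log_add_mul_exp_add_add_log_add_mul_exp_sub hγt₁ hγt₀ x0 x
  have hden := log_add_mul_exp_add_add_log_add_mul_exp_sub hγb₁ hγb x0 x
  rw [hq] at hnum
  simp only [hF]
  rw [log_div (by positivity) (by positivity), log_div (by positivity) (by positivity),
    log_div (by positivity) (by positivity)]
  linarith
end

section
/- Let 0 < γ_b < γ_t < 1, Ae > 0, σ₀ > 0, σ > 0, and let 0 < z_th < Ae. Define p₀ = (1−γ_b)·Q(z_th/σ₀) + γ_b·Q((z_th−Ae)/√(σ₀²+σ²)) and p₁ = (1−γ_t)·Q(z_th/σ₀) + γ_t·Q((z_th−Ae)/√(σ₀²+σ²)). Then the following four inequalities hold: 1 < (1−p₀)/(1−p₁) < (1−γ_b)/(1−γ_t) and γ_b/γ_t < p₀/p₁ < 1. -/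
/-!
Write `a = Q(z_th/σ₀)` and `b = Q((z_th − Ae)/√(σ₀² + σ²))`. Since `Q` is a strictly decreasing
tail probability and `z_th/σ₀ > 0 > (z_th − Ae)/√(σ₀² + σ²)`, we have `0 < a < b < 1`, and
`p = (1 − γ) a + γ b` is a convex combination. Then `p/γ = a/γ + (b − a)` decreases in `γ`, which
gives `γ_b/γ_t < p₀/p₁ < 1`. The complements `1 − p` are again such combinations of
`1 − b < 1 − a` with the weights `1 − γ` swapped in, so the same bound, inverted, gives the other
two inequalities.
-/

open MeasureTheory Real

open Set ProbabilityTheory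

theorem setIntegral_gaussianPDFReal_pos (μ : ℝ) {v : NNReal} (hv : v ≠ 0) {s : Set ℝ}
    (hs : volume s ≠ 0) : 0 < ∫ u in s, gaussianPDFReal μ v u := by
  rw [setIntegral_pos_iff_support_of_nonneg_ae
    (ae_of_all _ (gaussianPDFReal_nonneg μ v)) (integrable_gaussianPDFReal μ v).integrableOn,
    Function.support_eq_univ fun u => (gaussianPDFReal_pos μ v u hv).ne', univ_inter]
  exact pos_iff_ne_zero.2 hs

theorem gaussQ_eq_setIntegral_gaussianPDFReal (x : ℝ) :
    gaussQ x = ∫ u in Ioi x, gaussianPDFReal 0 1 u := by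
  simp [gaussQ, gaussianPDFReal]

theorem gaussQ_pos (x : ℝ) : 0 < gaussQ x := by
  rw [gaussQ_eq_setIntegral_gaussianPDFReal]
  exact setIntegral_gaussianPDFReal_pos 0 one_ne_zero (by simp)

theorem gaussQ_lt_one (x : ℝ) : gaussQ x < 1 := by
  have hsplit := intervalIntegral.integral_Iic_add_Ioi (b := x)
    (integrable_gaussianPDFReal 0 1).integrableOn (integrable_gaussianPDFReal 0 1).integrableOn
  rw [integral_gaussianPDFReal_eq_one 0 one_ne_zero] at hsplit
  have hIic := setIntegral_gaussianPDFReal_pos 0 one_ne_zero (s := Iic x) (by simp)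
  rw [gaussQ_eq_setIntegral_gaussianPDFReal]
  linarith

theorem gaussQ_strictAnti : StrictAnti gaussQ := by
  intro x y hxy
  have hsplit := setIntegral_union (Ioc_disjoint_Ioi (le_refl y) (a := x)) measurableSet_Ioi
    (integrable_gaussianPDFReal 0 1).integrableOn (integrable_gaussianPDFReal 0 1).integrableOn
  rw [Ioc_union_Ioi_eq_Ioi hxy.le] at hsplit
  have hIoc := setIntegral_gaussianPDFReal_pos 0 one_ne_zero (s := Ioc x y) (by simp [hxy])
  simp only [gaussQ_eq_setIntegral_gaussianPDFReal]
  linarith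

def convexMix (γ a b : ℝ) : ℝ := (1 - γ) * a + γ * b

theorem one_sub_convexMix (γ a b : ℝ) :
    1 - convexMix γ a b = convexMix (1 - γ) (1 - b) (1 - a) := by
  unfold convexMix
  ring

theorem convexMix_lt_one {γ a b : ℝ} (hγ : γ < 1) (hab : a < b) (hb : b < 1) :
    convexMix γ a b < 1 := by
  unfold convexMix
  nlinarith

theorem convexMix_div_convexMix_bounds {γ γ' a b : ℝ} (hγ : 0 < γ) (hγγ' : γ < γ')
    (ha : 0 < a) (hab : a < b) :
    γ / γ' < convexMix γ a b / convexMix γ' a b ∧ convexMix γ a b / convexMix γ' a b < 1 := by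
  unfold convexMix
  have hγ'pos : 0 < γ' := hγ.trans hγγ'
  have hmix : 0 < (1 - γ') * a + γ' * b := by nlinarith
  constructor
  · rw [div_lt_div_iff₀ hγ'pos hmix]
    nlinarith
  · rw [div_lt_one hmix]
    nlinarith

theorem one_sub_convexMix_div_bounds {γ γ' a b : ℝ} (hγγ' : γ < γ') (hγ' : γ' < 1)
    (hab : a < b) (hb : b < 1) :
    1 < (1 - convexMix γ a b) / (1 - convexMix γ' a b) ∧
      (1 - convexMix γ a b) / (1 - convexMix γ' a b) < (1 - γ) / (1 - γ') := by
  have hpos (c : ℝ) (hc : c < 1) : 0 < 1 - convexMix c a b :=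
    sub_pos.2 (convexMix_lt_one hc hab hb)
  obtain ⟨hlow, hup⟩ := convexMix_div_convexMix_bounds (γ := 1 - γ') (γ' := 1 - γ)
    (by linarith) (by linarith) (by linarith : 0 < 1 - b) (by linarith : 1 - b < 1 - a)
  rw [← one_sub_convexMix, ← one_sub_convexMix] at hlow hup
  rw [← inv_div, ← inv_div (1 - γ')]
  exact ⟨(one_lt_inv₀ (div_pos (hpos γ' hγ') (hpos γ (hγγ'.trans hγ')))).2 hup,
    inv_strictAnti₀ (div_pos (by linarith) (by linarith)) hlow⟩

theorem stmt_14_general (γb γt Ae σ0 σ zth : ℝ)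
    (hγb : 0 < γb) (hγbt : γb < γt) (hγt : γt < 1)
    (hσ0 : 0 < σ0)
    (hz1 : 0 < zth) (hz2 : zth < Ae)
    (p0 p1 : ℝ)
    (hp0 : p0 = (1 - γb) * gaussQ (zth / σ0) +
      γb * gaussQ ((zth - Ae) / Real.sqrt (σ0 ^ 2 + σ ^ 2)))
    (hp1 : p1 = (1 - γt) * gaussQ (zth / σ0) +
      γt * gaussQ ((zth - Ae) / Real.sqrt (σ0 ^ 2 + σ ^ 2))) :
    1 < (1 - p0) / (1 - p1) ∧ (1 - p0) / (1 - p1) < (1 - γb) / (1 - γt) ∧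
      γb / γt < p0 / p1 ∧ p0 / p1 < 1 := by
  have hab : gaussQ (zth / σ0) < gaussQ ((zth - Ae) / Real.sqrt (σ0 ^ 2 + σ ^ 2)) := by
    refine gaussQ_strictAnti ((div_neg_of_neg_of_pos (by linarith) ?_).trans (by positivity))
    exact Real.sqrt_pos.2 (by positivity)
  obtain ⟨h1, h2⟩ := one_sub_convexMix_div_bounds hγbt hγt hab (gaussQ_lt_one _)
  obtain ⟨h3, h4⟩ := convexMix_div_convexMix_bounds hγb hγbt (gaussQ_pos _) hab
  subst hp0 hp1
  exact ⟨h1, h2, h3, h4⟩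

theorem stmt_14 (γb γt Ae σ0 σ zth : ℝ)
    (hγb : 0 < γb) (hγbt : γb < γt) (hγt : γt < 1)
    (hAe : 0 < Ae) (hσ0 : 0 < σ0) (hσ : 0 < σ)
    (hz1 : 0 < zth) (hz2 : zth < Ae)
    (p0 p1 : ℝ)
    (hp0 : p0 = (1 - γb) * gaussQ (zth / σ0) +
      γb * gaussQ ((zth - Ae) / Real.sqrt (σ0 ^ 2 + σ ^ 2)))
    (hp1 : p1 = (1 - γt) * gaussQ (zth / σ0) +
      γt * gaussQ ((zth - Ae) / Real.sqrt (σ0 ^ 2 + σ ^ 2))) :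
    1 < (1 - p0) / (1 - p1) ∧ (1 - p0) / (1 - p1) < (1 - γb) / (1 - γt) ∧
      γb / γt < p0 / p1 ∧ p0 / p1 < 1 :=
  stmt_14_general γb γt Ae σ0 σ zth hγb hγbt hγt hσ0 hz1 hz2 p0 p1 hp0 hp1
end
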